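/- arXiv:1307.3654 — 2 statements merged into one kernel-verified Lean document; each statement's English description precedes it below -/
import Mathlib

section
/- Let P = {P_θ : θ ∈ Θ₁ × Θ₂} be a model on (X, A) and let C₁, C₂ be sub-σ-algebras of A such that: (i) for each θ₂ ∈ Θ₂, C₁ is complete and sufficient for {P_{θ₁,θ₂} : θ₁ ∈ Θ₁}; (ii) for each θ₁ ∈ Θ₁, C₂ is complete and sufficient for {P_{θ₁,θ₂} : θ₂ ∈ Θ₂}. Then C₁ ⋁ C₂ is complete for P. -/
open MeasureTheory

/-- A sub-σ-algebra `C` of `mX` is (Lehmann–Scheffé) complete for the model `M`: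
every `C`-measurable real function, integrable with respect to every member of `M`
and with expectation `0` under every member, vanishes `P`-a.s. for every `P ∈ M`. -/
def IsLSComplete {X : Type*} (mX : MeasurableSpace X) (C : MeasurableSpace X)
    (M : Set (@Measure X mX)) : Prop :=
  ∀ h : X → ℝ, Measurable[C] h → (∀ P ∈ M, Integrable h P) →
    (∀ P ∈ M, ∫ x, h x ∂P = 0) → ∀ P ∈ M, h =ᵐ[P] 0

/-- A sub-σ-algebra `C` of `mX` is sufficient for the model `M`: for every
`mX`-measurable set `A` there is a single `C`-measurable version of the conditional
probability of `A` given `C`, valid simultaneously for all `P ∈ M`. -/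
def IsLSSufficient {X : Type*} (mX : MeasurableSpace X) (C : MeasurableSpace X)
    (M : Set (@Measure X mX)) : Prop :=
  ∀ A : Set X, MeasurableSet[mX] A →
    ∃ g : X → ℝ, Measurable[C] g ∧
      ∀ P ∈ M, ∀ s : Set X, MeasurableSet[C] s →
        ∫ x in s, g x ∂P = (P (s ∩ A)).toReal

/-!
Fix `θ = (θ₁, θ₂)` and a `C₁ ⊔ C₂`-measurable `h` with `∫ h dP_θ = 0` for all `θ`. By sufficiency,
`h` has a conditional expectation given `C₁` common to the submodel `{P_(·, θ₂)}`; its means vanish,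
so completeness kills it, i.e. `∫_{s₁} h dP_θ = 0` for every `s₁ ∈ C₁`. The same argument applied
to `1_{s₁} h`, `C₂` and the submodel `{P_(θ₁, ·)}` gives `∫_{s₁ ∩ s₂} h dP_θ = 0`, and the sets
`s₁ ∩ s₂` form a π-system generating `C₁ ⊔ C₂`, so `h = 0` `P_θ`-a.s.

Common conditional expectations of integrable functions are built from those of indicators
(which is what sufficiency provides) by linearity and monotone convergence in `ℝ≥0∞`.
-/

open Set
open scoped ENNReal

section SubSigmaAlgebra

variable {X : Type*} {C mX : MeasurableSpace X} {μ : Measure[mX] X}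

lemma ae_nonneg_of_forall_setIntegral_nonneg_of_le [IsFiniteMeasure μ] (hC : C ≤ mX)
    {g : X → ℝ} (hg : Measurable[C] g)
    (h : ∀ s, MeasurableSet[C] s → IntegrableOn g s μ → 0 ≤ ∫ x in s, g x ∂μ) :
    0 ≤ᵐ[μ] g := by
  have hnull : ∀ n : ℕ, μ (g ⁻¹' Ico (-n) 0) = 0 := by
    intro n
    set u := g ⁻¹' Ico (-(n : ℝ)) 0
    have hu : MeasurableSet[C] u := hg measurableSet_Ico
    have hint : IntegrableOn g u μ := by
      refine Measure.integrableOn_of_bounded (M := n) (measure_ne_top _ _)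
        (hg.mono hC le_rfl).aestronglyMeasurable ((ae_restrict_iff' (hC _ hu)).2 ?_)
      refine ae_of_all _ fun x ⟨hlo, hhi⟩ => ?_
      rw [Real.norm_eq_abs, abs_of_neg hhi]
      linarith
    have hsupp : u ⊆ Function.support (-g) := fun x hx => neg_ne_zero.2 hx.2.ne
    by_contra hpos
    have : 0 < ∫ x in u, -g x ∂μ := by
      refine (setIntegral_pos_iff_support_of_nonneg_ae ?_ hint.neg).2 ?_
      · exact (ae_restrict_iff' (hC _ hu)).2 (ae_of_all _ fun x hx => neg_nonneg.2 hx.2.le)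
      · rwa [inter_eq_right.2 hsupp, pos_iff_ne_zero]
    linarith [integral_neg (μ := μ.restrict u) g, h u hu hint]
  refine measure_mono_null (fun x hx => ?_) (measure_iUnion_null hnull)
  obtain ⟨n, hn⟩ := exists_nat_ge (-g x)
  exact mem_iUnion.2 ⟨n, neg_le.1 hn, not_le.1 hx⟩

lemma ae_le_of_forall_setLIntegral_le_of_le (hC : C ≤ mX) [SigmaFinite (μ.trim hC)]
    {f g : X → ℝ≥0∞} (hf : Measurable[C] f) (hg : Measurable[C] g)
    (h : ∀ s, MeasurableSet[C] s → ∫⁻ x in s, f x ∂μ ≤ ∫⁻ x in s, g x ∂μ) : f ≤ᵐ[μ] g := by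
  refine ae_le_of_ae_le_trim (ae_le_of_forall_setLIntegral_le_of_sigmaFinite hf fun s hs _ => ?_)
  rw [setLIntegral_trim hC hf hs, setLIntegral_trim hC hg hs]
  exact h s hs

end SubSigmaAlgebra

section Sufficiency

variable {X : Type*} {C mX : MeasurableSpace X} {M : Set (Measure[mX] X)}

lemma IsLSSufficient.exists_setLIntegral_eq (hC : C ≤ mX) (hM : ∀ P ∈ M, IsFiniteMeasure P)
    (hsuff : IsLSSufficient mX C M) {A : Set X} (hA : MeasurableSet A) :
    ∃ G : X → ℝ≥0∞, Measurable[C] G ∧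
      ∀ P ∈ M, ∀ s, MeasurableSet[C] s → ∫⁻ x in s, G x ∂P = P (s ∩ A) := by
  obtain ⟨g, hgm, hg⟩ := hsuff A hA
  refine ⟨fun x => ENNReal.ofReal (g x), ENNReal.measurable_ofReal.comp hgm,
    fun P hP s hs => ?_⟩
  have := hM P hP
  -- `g` is not known to be integrable, so the bounds `0 ≤ g ≤ 1` have to come from the sets
  -- on which it is.
  have hg_nonneg : 0 ≤ᵐ[P] g :=
    ae_nonneg_of_forall_setIntegral_nonneg_of_le hC hgm fun t ht _ => by
      rw [hg P hP t ht]; positivity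
  have hg_le_one : 0 ≤ᵐ[P] fun x => 1 - g x := by
    refine ae_nonneg_of_forall_setIntegral_nonneg_of_le hC (measurable_const.sub hgm)
      fun t ht hint => ?_
    have hgt : IntegrableOn g t P :=
      ((integrable_const (1 : ℝ)).sub hint).congr (ae_of_all _ fun x => by simp)
    rw [integral_sub (integrable_const 1) hgt, hg P hP t ht, setIntegral_const, smul_eq_mul,
      mul_one, sub_nonneg, ← measureReal_def]
    exact measureReal_mono inter_subset_left
  have hint : IntegrableOn g s P := by
    refine Measure.integrableOn_of_bounded (M := 1) (measure_ne_top _ _)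
      (hgm.mono hC le_rfl).aestronglyMeasurable (ae_restrict_of_ae ?_)
    filter_upwards [hg_nonneg, hg_le_one] with x h0 h1
    rw [Real.norm_eq_abs, abs_of_nonneg h0]
    simp only [Pi.zero_apply, sub_nonneg] at h1
    exact h1
  rw [← ofReal_integral_eq_lintegral_ofReal hint (ae_restrict_of_ae hg_nonneg), hg P hP s hs,
    ENNReal.ofReal_toReal (measure_ne_top _ _)]


def HasCommonCondLExp (C : MeasurableSpace X) (M : Set (Measure[mX] X)) (F : X → ℝ≥0∞) :
    Prop :=
  ∃ G : X → ℝ≥0∞, Measurable[C] G ∧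
    ∀ P ∈ M, ∀ s, MeasurableSet[C] s → ∫⁻ x in s, G x ∂P = ∫⁻ x in s, F x ∂P

lemma IsLSSufficient.hasCommonCondLExp_indicator (hC : C ≤ mX)
    (hM : ∀ P ∈ M, IsFiniteMeasure P) (hsuff : IsLSSufficient mX C M) (c : ℝ≥0∞) {A : Set X}
    (hA : MeasurableSet A) : HasCommonCondLExp C M (A.indicator fun _ => c) := by
  obtain ⟨G, hGm, hG⟩ := hsuff.exists_setLIntegral_eq hC hM hA
  refine ⟨fun x => c * G x, hGm.const_mul c, fun P hP s hs => ?_⟩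
  rw [lintegral_const_mul c (hGm.mono hC le_rfl), hG P hP s hs, lintegral_indicator_const hA,
    Measure.restrict_apply hA, inter_comm]

lemma HasCommonCondLExp.add (hC : C ≤ mX) {F₁ F₂ : X → ℝ≥0∞} (hF₁ : Measurable F₁)
    (h₁ : HasCommonCondLExp C M F₁) (h₂ : HasCommonCondLExp C M F₂) :
    HasCommonCondLExp C M (F₁ + F₂) := by
  obtain ⟨G₁, hG₁m, hG₁⟩ := h₁
  obtain ⟨G₂, hG₂m, hG₂⟩ := h₂
  refine ⟨G₁ + G₂, hG₁m.add hG₂m, fun P hP s hs => ?_⟩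
  simp only [Pi.add_apply]
  rw [lintegral_add_left (hG₁m.mono hC le_rfl), lintegral_add_left hF₁, hG₁ P hP s hs,
    hG₂ P hP s hs]

lemma HasCommonCondLExp.iSup (hC : C ≤ mX) (hM : ∀ P ∈ M, IsFiniteMeasure P)
    {F : ℕ → X → ℝ≥0∞} (hFm : ∀ n, Measurable (F n)) (hF : Monotone F)
    (h : ∀ n, HasCommonCondLExp C M (F n)) : HasCommonCondLExp C M fun x => ⨆ n, F n x := by
  choose G hGm hG using h
  refine ⟨fun x => ⨆ n, G n x, Measurable.iSup hGm, fun P hP s hs => ?_⟩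
  have := hM P hP
  -- Each `G n` is monotone in `n` only off a `P`-null set depending on `P`; the pointwise
  -- supremum is nevertheless a version for every `P`, which is why we work in `ℝ≥0∞`.
  have hG_mono : ∀ n, G n ≤ᵐ[P] G (n + 1) := fun n =>
    ae_le_of_forall_setLIntegral_le_of_le hC (hGm n) (hGm (n + 1)) fun t ht => by
      rw [hG n P hP t ht, hG (n + 1) P hP t ht]
      exact lintegral_mono fun x => hF n.le_succ x
  rw [lintegral_iSup' (fun n => (hGm n).mono hC le_rfl |>.aemeasurable)
      (ae_restrict_of_ae ((ae_all_iff.2 hG_mono).mono fun x hx => monotone_nat_of_le_succ hx)),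
    lintegral_iSup (fun n => hFm n) hF]
  exact iSup_congr fun n => hG n P hP s hs

lemma IsLSSufficient.hasCommonCondLExp (hC : C ≤ mX) (hM : ∀ P ∈ M, IsFiniteMeasure P)
    (hsuff : IsLSSufficient mX C M) {F : X → ℝ≥0∞} (hF : Measurable F) :
    HasCommonCondLExp C M F :=
  Measurable.ennreal_induction (hsuff.hasCommonCondLExp_indicator hC hM)
    (fun _ _ _ hF₁ _ h₁ h₂ => h₁.add hC hF₁ h₂) (fun _ hFm hF h => .iSup hC hM hFm hF h) hF


lemma setIntegral_toReal_eq_of_forall_setLIntegral_eq (hC : C ≤ mX) {μ : Measure[mX] X}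
    {F G : X → ℝ≥0∞} (hG : Measurable[C] G) (hF : ∫⁻ x, F x ∂μ ≠ ∞)
    (h : ∀ s, MeasurableSet[C] s → ∫⁻ x in s, G x ∂μ = ∫⁻ x in s, F x ∂μ) :
    Integrable (fun x => (G x).toReal) μ ∧
      ∀ s, MeasurableSet[C] s → ∫ x in s, (G x).toReal ∂μ = (∫⁻ x in s, F x ∂μ).toReal := by
  have hG' : Measurable G := hG.mono hC le_rfl
  have hG_fin : ∫⁻ x, G x ∂μ ≠ ∞ := by
    simpa only [Measure.restrict_univ] using (h univ .univ).trans_ne (by simpa using hF)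
  refine ⟨integrable_toReal_of_lintegral_ne_top hG'.aemeasurable hG_fin, fun s hs => ?_⟩
  rw [integral_toReal hG'.aemeasurable (ae_restrict_of_ae (ae_lt_top hG' hG_fin)), h s hs]

lemma IsLSSufficient.exists_forall_setIntegral_eq (hC : C ≤ mX)
    (hM : ∀ P ∈ M, IsFiniteMeasure P) (hsuff : IsLSSufficient mX C M) {f : X → ℝ}
    (hf : Measurable f) (hfi : ∀ P ∈ M, Integrable f P) :
    ∃ g : X → ℝ, Measurable[C] g ∧ ∀ P ∈ M, Integrable g P ∧
      ∀ s, MeasurableSet[C] s → ∫ x in s, g x ∂P = ∫ x in s, f x ∂P := by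
  obtain ⟨Gpos, hGposm, hGpos⟩ := hsuff.hasCommonCondLExp hC hM hf.ennreal_ofReal
  obtain ⟨Gneg, hGnegm, hGneg⟩ := hsuff.hasCommonCondLExp hC hM hf.neg.ennreal_ofReal
  refine ⟨fun x => (Gpos x).toReal - (Gneg x).toReal,
    hGposm.ennreal_toReal.sub hGnegm.ennreal_toReal, fun P hP => ?_⟩
  obtain ⟨hint_pos, hset_pos⟩ := setIntegral_toReal_eq_of_forall_setLIntegral_eq hC hGposm
    (hfi P hP).lintegral_lt_top.ne (hGpos P hP)
  obtain ⟨hint_neg, hset_neg⟩ := setIntegral_toReal_eq_of_forall_setLIntegral_eq hC hGnegm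
    (hfi P hP).neg.lintegral_lt_top.ne (hGneg P hP)
  refine ⟨hint_pos.sub hint_neg, fun s hs => ?_⟩
  rw [integral_sub hint_pos.integrableOn hint_neg.integrableOn, hset_pos s hs, hset_neg s hs,
    integral_eq_lintegral_pos_part_sub_lintegral_neg_part (hfi P hP).integrableOn]
  rfl

lemma IsLSComplete.setIntegral_eq_zero (hC : C ≤ mX) (hM : ∀ P ∈ M, IsFiniteMeasure P)
    (hcomp : IsLSComplete mX C M) (hsuff : IsLSSufficient mX C M) {f : X → ℝ}
    (hf : Measurable f) (hfi : ∀ P ∈ M, Integrable f P) (hf0 : ∀ P ∈ M, ∫ x, f x ∂P = 0)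
    {P : Measure[mX] X} (hP : P ∈ M) {s : Set X} (hs : MeasurableSet[C] s) :
    ∫ x in s, f x ∂P = 0 := by
  obtain ⟨g, hgm, hg⟩ := hsuff.exists_forall_setIntegral_eq hC hM hf hfi
  have hg0 : g =ᵐ[P] 0 := by
    refine hcomp g hgm (fun Q hQ => (hg Q hQ).1) (fun Q hQ => ?_) P hP
    simpa only [Measure.restrict_univ, hf0 Q hQ] using (hg Q hQ).2 univ .univ
  rw [← (hg P hP).2 s hs, setIntegral_congr_ae (hC s hs) (hg0.mono fun x hx _ => hx)]
  simp

end Sufficiency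

section Join

variable {X : Type*}

lemma MeasurableSpace.sup_eq_generateFrom_inter (C₁ C₂ : MeasurableSpace X) :
    C₁ ⊔ C₂ =
      generateFrom (image2 (· ∩ ·) {s | MeasurableSet[C₁] s} {s | MeasurableSet[C₂] s}) := by
  refine le_antisymm (sup_le (fun t ht => ?_) (fun t ht => ?_)) (generateFrom_le ?_)
  · exact measurableSet_generateFrom ⟨t, ht, univ, .univ, inter_univ t⟩
  · exact measurableSet_generateFrom ⟨univ, .univ, t, ht, univ_inter t⟩
  · rintro _ ⟨s₁, hs₁, s₂, hs₂, rfl⟩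
    exact (le_sup_left (b := C₂) _ hs₁).inter (le_sup_right (a := C₁) _ hs₂)

lemma IsPiSystem.image2_inter {S T : Set (Set X)} (hS : IsPiSystem S) (hT : IsPiSystem T) :
    IsPiSystem (image2 (· ∩ ·) S T) := by
  rintro _ ⟨s₁, hs₁, t₁, ht₁, rfl⟩ _ ⟨s₂, hs₂, t₂, ht₂, rfl⟩ hne
  rw [inter_inter_inter_comm] at hne ⊢
  exact mem_image2_of_mem (hS _ hs₁ _ hs₂ hne.left) (hT _ ht₁ _ ht₂ hne.right)

variable {m mX : MeasurableSpace X} {μ : Measure[mX] X}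

lemma setIntegral_eq_zero_of_isPiSystem (hm : m ≤ mX) {S : Set (Set X)}
    (h_eq : m = MeasurableSpace.generateFrom S) (h_pi : IsPiSystem S) {f : X → ℝ}
    (hf : Integrable f μ) (h_univ : ∫ x, f x ∂μ = 0) (hS : ∀ t ∈ S, ∫ x in t, f x ∂μ = 0)
    {t : Set X} (ht : MeasurableSet[m] t) : ∫ x in t, f x ∂μ = 0 := by
  induction t, ht using MeasurableSpace.induction_on_inter h_eq h_pi with
  | empty => simp
  | basic t ht => exact hS t ht
  | compl t ht ih => linarith [integral_add_compl (hm t ht) hf]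
  | iUnion F hdisj hFm ih =>
    rw [integral_iUnion (fun i => hm _ (hFm i)) hdisj hf.integrableOn]
    simp [ih]

lemma ae_eq_zero_of_forall_setIntegral_inter_eq_zero [IsFiniteMeasure μ]
    {C₁ C₂ : MeasurableSpace X} (hC₁ : C₁ ≤ mX) (hC₂ : C₂ ≤ mX) {f : X → ℝ}
    (hf : Measurable[C₁ ⊔ C₂] f) (hfi : Integrable f μ)
    (h : ∀ s₁, MeasurableSet[C₁] s₁ → ∀ s₂, MeasurableSet[C₂] s₂ → ∫ x in s₁ ∩ s₂, f x ∂μ = 0) :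
    f =ᵐ[μ] 0 := by
  have hC : C₁ ⊔ C₂ ≤ mX := sup_le hC₁ hC₂
  have h_univ : ∫ x, f x ∂μ = 0 := by simpa using h univ .univ univ .univ
  refine ae_eq_of_forall_setIntegral_eq_of_sigmaFinite' hC (fun s _ _ => hfi.integrableOn)
    (fun s _ _ => integrableOn_zero) (fun s hs _ => ?_) hf.aestronglyMeasurable
    aestronglyMeasurable_const
  simp only [Pi.zero_apply, integral_zero]
  refine setIntegral_eq_zero_of_isPiSystem hC (MeasurableSpace.sup_eq_generateFrom_inter C₁ C₂)
    (IsPiSystem.image2_inter (@MeasurableSpace.isPiSystem_measurableSet _ C₁)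
      (@MeasurableSpace.isPiSystem_measurableSet _ C₂)) hfi h_univ ?_ hs
  rintro _ ⟨s₁, hs₁, s₂, hs₂, rfl⟩
  exact h s₁ hs₁ s₂ hs₂

end Join

/-- **Corollary.** If `C₁` is complete sufficient for each submodel with fixed `θ₂`,
and `C₂` is complete sufficient for each submodel with fixed `θ₁`, then `C₁ ⊔ C₂`
is complete for the whole model `{P θ : θ ∈ Θ₁ × Θ₂}`. -/
theorem jointly_complete_two_parameters
    {X : Type*} (mX : MeasurableSpace X) {Θ₁ Θ₂ : Type*}
    (P : Θ₁ × Θ₂ → @Measure X mX) (hprob : ∀ θ, IsProbabilityMeasure (P θ))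
    (C₁ C₂ : MeasurableSpace X) (hle₁ : C₁ ≤ mX) (hle₂ : C₂ ≤ mX)
    (h₁ : ∀ θ₂ : Θ₂, IsLSComplete mX C₁ {R | ∃ θ₁, R = P (θ₁, θ₂)} ∧
      IsLSSufficient mX C₁ {R | ∃ θ₁, R = P (θ₁, θ₂)})
    (h₂ : ∀ θ₁ : Θ₁, IsLSComplete mX C₂ {R | ∃ θ₂, R = P (θ₁, θ₂)} ∧
      IsLSSufficient mX C₂ {R | ∃ θ₂, R = P (θ₁, θ₂)}) :
    IsLSComplete mX (C₁ ⊔ C₂) (Set.range P) := by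
  rintro h hh hint hzero _ ⟨⟨θ₁, θ₂⟩, rfl⟩
  have hfin : ∀ R ∈ Set.range P, IsFiniteMeasure R := by rintro _ ⟨θ, rfl⟩; exact inferInstance
  have hsub₁ : ∀ b, {R | ∃ a, R = P (a, b)} ⊆ Set.range P := by rintro b _ ⟨a, rfl⟩; exact ⟨_, rfl⟩
  have hsub₂ : ∀ a, {R | ∃ b, R = P (a, b)} ⊆ Set.range P := by rintro a _ ⟨b, rfl⟩; exact ⟨_, rfl⟩
  have hmeas : Measurable[mX] h := hh.mono (sup_le hle₁ hle₂) le_rfl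
  have hC₁ : ∀ a b s₁, MeasurableSet[C₁] s₁ → ∫ x in s₁, h x ∂P (a, b) = 0 := fun a b _ hs₁ =>
    (h₁ b).1.setIntegral_eq_zero hle₁ (fun R hR => hfin R (hsub₁ b hR)) (h₁ b).2 hmeas
      (fun R hR => hint R (hsub₁ b hR)) (fun R hR => hzero R (hsub₁ b hR)) ⟨a, rfl⟩ hs₁
  refine ae_eq_zero_of_forall_setIntegral_inter_eq_zero hle₁ hle₂ hh (hint _ ⟨_, rfl⟩)
    fun s₁ hs₁ s₂ hs₂ => ?_
  rw [inter_comm, ← setIntegral_indicator (hle₁ _ hs₁)]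
  refine (h₂ θ₁).1.setIntegral_eq_zero hle₂ (fun R hR => hfin R (hsub₂ θ₁ hR)) (h₂ θ₁).2
    (hmeas.indicator (hle₁ _ hs₁)) (fun R hR => (hint R (hsub₂ θ₁ hR)).indicator (hle₁ _ hs₁))
    ?_ ⟨θ₂, rfl⟩ hs₂
  rintro _ ⟨b, rfl⟩
  rw [integral_indicator (hle₁ _ hs₁)]
  exact hC₁ θ₁ b s₁ hs₁
end

section
/- Let μ be a measure on a measurable subspace X of the extended real line, n ∈ ℕ, and consider the coordinate projections X₁,…,X_n on Xⁿ. Then min_{i=1}^n X_i is complete and sufficient for the model {μ(·|J)^{⊗n} : J an upray in X with 0 < μ(J) < ∞}. -/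
/-! For sets `J`, `K` of positive finite measure, `μ(·|J)^{⊗n}` restricted to `Kⁿ` is
`(μ K / μ J)ⁿ` times `μ(·|K)^{⊗n}` restricted to `Jⁿ`. For an upray `K` the box `Kⁿ` is the event
`{min Xᵢ ∈ upperClosure K}`, and these boxes form a π-system generating `σ(min Xᵢ)`.

Completeness: uprays are totally ordered by inclusion, so by the restriction identity a statistic
with mean zero under every member of the model has zero integral over every box `Kⁿ`, hence
vanishes almost surely.

Sufficiency: the model is not dominated, but a sequence of uprays whose measures approach the
supremum exhausts every member up to a null set. Gluing versions of `P(A | min Xᵢ)` for the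
corresponding product laws along the disjointed boxes gives one version valid under every member
of the model, again by the restriction identity.
-/

open MeasureTheory

/-- The conditional law `μ(·|E) = μ(· ∩ E)/μ(E)`. -/
noncomputable def condLaw {X : Type*} [mX : MeasurableSpace X] (μ : Measure X)
    (E : Set X) : Measure X :=
  (μ E)⁻¹ • μ.restrict E

open Set Function
open scoped ENNReal

section CondLaw

variable {X : Type*} [MeasurableSpace X] {μ : Measure X} {J K : Set X}

theorem isProbabilityMeasure_condLaw (h0 : μ J ≠ 0) (ht : μ J ≠ ∞) :
    IsProbabilityMeasure (condLaw μ J) :=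
  ⟨by rw [condLaw, Measure.smul_apply, Measure.restrict_apply_univ, smul_eq_mul,
    ENNReal.inv_mul_cancel h0 ht]⟩

theorem restrict_condLaw (hK : MeasurableSet K) :
    (condLaw μ J).restrict K = (μ J)⁻¹ • μ.restrict (K ∩ J) := by
  rw [condLaw, Measure.restrict_smul, Measure.restrict_restrict hK]

theorem restrict_condLaw_of_subset (hJK : J ⊆ K) (hK : MeasurableSet K) :
    (condLaw μ J).restrict K = condLaw μ J := by
  rw [restrict_condLaw hK, inter_eq_right.mpr hJK, condLaw]

theorem restrict_condLaw_comm (hJ : MeasurableSet J) (hK : MeasurableSet K) (hK0 : μ K ≠ 0)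
    (hKt : μ K ≠ ∞) :
    (condLaw μ J).restrict K = (μ K * (μ J)⁻¹) • (condLaw μ K).restrict J := by
  rw [restrict_condLaw hK, restrict_condLaw hJ, smul_smul, mul_right_comm,
    ENNReal.mul_inv_cancel hK0 hKt, one_mul, inter_comm]

theorem condLaw_eq_zero_of_measure_eq_zero (hK : MeasurableSet K) (hK0 : μ K = 0) :
    condLaw μ J K = 0 := by
  rw [condLaw, Measure.smul_apply, Measure.restrict_apply hK,
    measure_mono_null inter_subset_left hK0, smul_zero]

end CondLaw

section PiCondLaw

variable {X ι : Type*} [MeasurableSpace X] [Fintype ι] {μ : Measure X} {J K : Set X}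

theorem MeasureTheory.Measure.pi_smul {α : ι → Type*} [∀ i, MeasurableSpace (α i)]
    (ν : ∀ i, Measure (α i)) [∀ i, IsFiniteMeasure (ν i)] {c : ℝ≥0∞} (hc : c ≠ ∞) :
    Measure.pi (fun i => c • ν i) = c ^ Fintype.card ι • Measure.pi ν := by
  have := fun i => (ν i).smul_finite hc
  refine Measure.pi_eq fun s hs => ?_
  simp only [Measure.smul_apply, smul_eq_mul, Measure.pi_pi, Finset.prod_mul_distrib,
    Finset.prod_const, Finset.card_univ]

theorem restrict_pi_condLaw_of_subset (hJK : J ⊆ K) (hK : MeasurableSet K) (hJ0 : μ J ≠ 0)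
    (hJt : μ J ≠ ∞) :
    (Measure.pi fun _ : ι => condLaw μ J).restrict (univ.pi fun _ => K)
      = Measure.pi fun _ : ι => condLaw μ J := by
  have := isProbabilityMeasure_condLaw hJ0 hJt
  rw [Measure.restrict_pi_pi]
  simp_rw [restrict_condLaw_of_subset hJK hK]

theorem restrict_pi_condLaw_comm (hJ : MeasurableSet J) (hK : MeasurableSet K)
    (hJ0 : μ J ≠ 0) (hJt : μ J ≠ ∞) (hK0 : μ K ≠ 0) (hKt : μ K ≠ ∞) :
    (Measure.pi fun _ : ι => condLaw μ J).restrict (univ.pi fun _ => K)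
      = (μ K * (μ J)⁻¹) ^ Fintype.card ι •
        (Measure.pi fun _ : ι => condLaw μ K).restrict (univ.pi fun _ => J) := by
  have := isProbabilityMeasure_condLaw hJ0 hJt
  have := isProbabilityMeasure_condLaw hK0 hKt
  rw [Measure.restrict_pi_pi, Measure.restrict_pi_pi]
  simp_rw [restrict_condLaw_comm hJ hK hK0 hKt]
  exact Measure.pi_smul _ (ENNReal.mul_ne_top hKt (ENNReal.inv_ne_top.mpr hJ0))

theorem pi_condLaw_pi_eq_zero [Nonempty ι] (hK : MeasurableSet K) (hK0 : μ K = 0)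
    (hJ0 : μ J ≠ 0) (hJt : μ J ≠ ∞) :
    (Measure.pi fun _ : ι => condLaw μ J) (univ.pi fun _ => K) = 0 := by
  have := isProbabilityMeasure_condLaw hJ0 hJt
  simp [Measure.pi_pi, condLaw_eq_zero_of_measure_eq_zero hK hK0]

theorem pi_condLaw_compl_pi_eq_zero (hK : MeasurableSet K) (hJK : μ (J \ K) = 0)
    (hJ0 : μ J ≠ 0) (hJt : μ J ≠ ∞) :
    (Measure.pi fun _ : ι => condLaw μ J) (univ.pi fun _ => K)ᶜ = 0 := by
  have := isProbabilityMeasure_condLaw hJ0 hJt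
  have hKae : K ∈ ae (condLaw μ J) := by
    rw [mem_ae_iff, condLaw, Measure.smul_apply, Measure.restrict_apply hK.compl,
      ← sdiff_eq_compl_inter, hJK, smul_zero]
  rw [← mem_ae_iff, univ_pi_eq_iInter]
  exact Filter.iInter_mem.mpr fun i => Measure.tendsto_eval_ae_ae hKae

end PiCondLaw

section Upray

theorem isUpperSet_iff_forall_mem_le {α : Type*} [Preorder α] {s : Set α} :
    IsUpperSet s ↔ ∀ x ∈ s, ∀ y, x ≤ y → y ∈ s :=
  ⟨fun h _ hx _ hxy => h hxy hx, fun h _ _ hxy hx => h _ hx _ hxy⟩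

theorem IsUpperSet.preimage_val_upperClosure {α : Type*} [Preorder α] {S : Set α} {J : Set S}
    (hJ : IsUpperSet J) : Subtype.val ⁻¹' (upperClosure (Subtype.val '' J) : Set α) = J := by
  ext x
  simp only [mem_preimage, SetLike.mem_coe, mem_upperClosure, mem_image]
  constructor
  · rintro ⟨_, ⟨y, hy, rfl⟩, hyx⟩
    exact hJ (Subtype.coe_le_coe.mp hyx) hy
  · exact fun hx => ⟨x, ⟨x, hx, rfl⟩, le_rfl⟩

theorem pi_iUnion_subset_iUnion_pi {α ι κ : Type*} [LinearOrder α] [Finite ι] [Nonempty ι]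
    {K : κ → Set α} (hK : ∀ k, IsUpperSet (K k)) :
    univ.pi (fun _ : ι => ⋃ k, K k) ⊆ ⋃ k, univ.pi fun _ : ι => K k := by
  intro x hx
  obtain ⟨i, hi⟩ := Finite.exists_min x
  obtain ⟨k, hk⟩ := mem_iUnion.mp (hx i trivial)
  exact mem_iUnion.mpr ⟨k, fun j _ => hK k (hi j) hk⟩

variable {S : Set EReal}

theorem IsUpperSet.measurableSet {J : Set S} (hJ : IsUpperSet J) : MeasurableSet J := by
  rw [← hJ.preimage_val_upperClosure]
  exact measurable_subtype_coe (upperClosure _).upper.ordConnected.measurableSet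

variable {ι : Type*}

noncomputable def coordInf (x : ι → S) : EReal := ⨅ i, (x i : EReal)

theorem measurable_coordInf [Countable ι] : Measurable (coordInf : (ι → S) → EReal) :=
  Measurable.iInf fun i => (measurable_pi_apply i).subtype_val

theorem coordInf_preimage_Ici (a : EReal) :
    coordInf ⁻¹' Ici a = univ.pi fun _ : ι => (Subtype.val ⁻¹' Ici a : Set S) := by
  ext x
  simp only [coordInf, mem_preimage, mem_Ici, le_iInf_iff, mem_univ_pi]

theorem coordInf_preimage_upperClosure [Finite ι] [Nonempty ι] {K : Set S} (hK : IsUpperSet K) :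
    coordInf ⁻¹' (upperClosure (Subtype.val '' K) : Set EReal) = univ.pi fun _ : ι => K := by
  ext x
  simp only [coordInf, mem_preimage, SetLike.mem_coe, mem_upperClosure, mem_image,
    mem_univ_pi]
  constructor
  · rintro ⟨_, ⟨y, hy, rfl⟩, hyx⟩ i
    exact hK (Subtype.coe_le_coe.mp (hyx.trans (iInf_le _ i))) hy
  · intro hx
    obtain ⟨i, hi⟩ := Finite.exists_min x
    exact ⟨x i, ⟨x i, hx i, rfl⟩, le_iInf fun j => Subtype.coe_le_coe.mpr (hi j)⟩

theorem measurableSet_comap_coordInf_pi [Finite ι] [Nonempty ι] {K : Set S} (hK : IsUpperSet K) :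
    MeasurableSet[MeasurableSpace.comap coordInf inferInstance] (univ.pi fun _ : ι => K) :=
  ⟨_, (upperClosure _).upper.ordConnected.measurableSet, coordInf_preimage_upperClosure hK⟩

theorem comap_coordInf_eq_generateFrom [Finite ι] [Nonempty ι] :
    MeasurableSpace.comap (coordInf : (ι → S) → EReal) inferInstance
      = MeasurableSpace.generateFrom
          {B | ∃ K : Set S, IsUpperSet K ∧ B = univ.pi fun _ : ι => K} := by
  refine le_antisymm ?_ (MeasurableSpace.generateFrom_le ?_)
  · rw [BorelSpace.measurable_eq (α := EReal), borel_eq_generateFrom_Ici,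
      MeasurableSpace.comap_generateFrom]
    refine MeasurableSpace.generateFrom_mono ?_
    rintro _ ⟨_, ⟨a, rfl⟩, rfl⟩
    exact ⟨_, (isUpperSet_Ici a).preimage (Subtype.mono_coe _), coordInf_preimage_Ici a⟩
  · rintro _ ⟨K, hK, rfl⟩
    exact measurableSet_comap_coordInf_pi hK

theorem isPiSystem_pi_isUpperSet :
    IsPiSystem {B | ∃ K : Set S, IsUpperSet K ∧ B = univ.pi fun _ : ι => K} := by
  rintro _ ⟨K, hK, rfl⟩ _ ⟨L, hL, rfl⟩ -
  exact ⟨K ∩ L, hK.inter hL, (pi_inter_distrib).symm⟩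

end Upray

theorem IsChain.exists_seq_measure_sdiff_iUnion_eq_zero {X : Type*} [MeasurableSpace X]
    {μ : Measure X} {𝒥 : Set (Set X)} (hchain : IsChain (· ⊆ ·) 𝒥) (hne : 𝒥.Nonempty)
    (hmeas : ∀ J ∈ 𝒥, MeasurableSet J) (hfin : ∀ J ∈ 𝒥, μ J ≠ ∞) :
    ∃ K : ℕ → Set X, (∀ k, K k ∈ 𝒥) ∧ ∀ J ∈ 𝒥, μ (J \ ⋃ k, K k) = 0 := by
  obtain ⟨u, -, hu, hu𝒥⟩ := exists_seq_tendsto_sSup (hne.image μ) (OrderTop.bddAbove _)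
  choose K hK hKu using hu𝒥
  refine ⟨K, hK, fun J hJ => ?_⟩
  by_cases hsub : ∃ k, J ⊆ K k
  · obtain ⟨k, hk⟩ := hsub
    rw [sdiff_eq_empty.mpr (hk.trans (subset_iUnion K k)), measure_empty]
  push Not at hsub
  have hKJ : ⋃ k, K k ⊆ J :=
    iUnion_subset fun k => (hchain.total hJ (hK k)).resolve_left (hsub k)
  have hsup : μ J ≤ μ (⋃ k, K k) :=
    (le_csSup (OrderTop.bddAbove _) (mem_image_of_mem μ hJ)).trans
      (le_of_tendsto' hu fun k => hKu k ▸ measure_mono (subset_iUnion K k))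
  rw [measure_sdiff hKJ (MeasurableSet.iUnion fun k => hmeas _ (hK k)).nullMeasurableSet
    (ne_top_of_le_ne_top (hfin J hJ) (measure_mono hKJ))]
  exact tsub_eq_zero_of_le hsup

section SetIntegral

variable {Ω : Type*} {m m0 : MeasurableSpace Ω} {μ : Measure Ω}

theorem setIntegral_eq_zero_of_isPiSystem_s12 {G : Set (Set Ω)} (hm : m ≤ m0)
    (hG : m = MeasurableSpace.generateFrom G) (hGπ : IsPiSystem G) {f : Ω → ℝ}
    (hf : Integrable f μ) (hfG : ∀ s ∈ G, ∫ x in s, f x ∂μ = 0) (huniv : ∫ x, f x ∂μ = 0)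
    {s : Set Ω} (hs : MeasurableSet[m] s) : ∫ x in s, f x ∂μ = 0 := by
  induction s, hs using MeasurableSpace.induction_on_inter hG hGπ with
  | empty => simp
  | basic s hs => exact hfG s hs
  | compl s hs ih => rw [setIntegral_compl (hm s hs) hf, huniv, ih, sub_zero]
  | iUnion s hdisj hs ih =>
    rw [integral_iUnion (fun k => hm _ (hs k)) hdisj hf.integrableOn]
    simp [ih]

theorem ae_eq_zero_of_setIntegral_eq_zero_of_isPiSystem [IsFiniteMeasure μ] {G : Set (Set Ω)}
    (hm : m ≤ m0) (hG : m = MeasurableSpace.generateFrom G) (hGπ : IsPiSystem G) {f : Ω → ℝ}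
    (hfm : Measurable[m] f) (hf : Integrable f μ) (hfG : ∀ s ∈ G, ∫ x in s, f x ∂μ = 0)
    (huniv : ∫ x, f x ∂μ = 0) : f =ᵐ[μ] 0 :=
  ae_eq_zero_of_forall_setIntegral_eq_of_finStronglyMeasurable_trim hm
    (fun _ _ _ => hf.integrableOn)
    (fun _ hs _ => setIntegral_eq_zero_of_isPiSystem_s12 hm hG hGπ hf hfG huniv hs)
    (hfm.stronglyMeasurable.finStronglyMeasurable _)

end SetIntegral

section CondProb

variable {Ω : Type*} {m m0 : MeasurableSpace Ω} {A : Set Ω} {g g' : Ω → ℝ≥0∞} {P : Measure Ω}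

/-- `g` satisfies the defining identity of a version of `P(A | m)`; its `m`-measurability is not
part of the definition. -/
def IsCondProb {m0 : MeasurableSpace Ω} (m : MeasurableSpace Ω) (A : Set Ω) (g : Ω → ℝ≥0∞)
    (P : Measure[m0] Ω) : Prop :=
  ∀ s, MeasurableSet[m] s → ∫⁻ x in s, g x ∂P = P (s ∩ A)

namespace IsCondProb

theorem smul (h : IsCondProb m A g P) (c : ℝ≥0∞) : IsCondProb m A g (c • P) := fun s hs => by
  rw [Measure.restrict_smul, lintegral_smul_measure, h s hs, Measure.smul_apply, smul_eq_mul]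

theorem restrict (hm : m ≤ m0) (h : IsCondProb m A g P) {B : Set Ω} (hB : MeasurableSet[m] B) :
    IsCondProb m A g (P.restrict B) := fun s hs => by
  rw [Measure.restrict_restrict (hm s hs), h _ (hs.inter hB), Measure.restrict_apply' (hm B hB),
    inter_right_comm]

theorem congr (hm : m ≤ m0) {D : Set Ω} (hD : MeasurableSet D) (hg : EqOn g g' D)
    (h : IsCondProb m A g (P.restrict D)) : IsCondProb m A g' (P.restrict D) := fun s hs => by
  rw [← h s hs, Measure.restrict_restrict (hm s hs)]
  exact setLIntegral_congr_fun ((hm s hs).inter hD) fun x hx => (hg hx.2).symm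

theorem of_restrict_iUnion (hm : m ≤ m0) (hA : MeasurableSet A) {D : ℕ → Set Ω}
    (hDm : ∀ k, MeasurableSet[m] (D k)) (hD : Pairwise (Disjoint on D)) (hP : P (⋃ k, D k)ᶜ = 0)
    (h : ∀ k, IsCondProb m A g (P.restrict (D k))) : IsCondProb m A g P := by
  have hsum : P = Measure.sum fun k => P.restrict (D k) := by
    rw [← Measure.restrict_iUnion hD fun k => hm _ (hDm k),
      Measure.restrict_eq_self_of_ae_mem (mem_ae_iff.mpr hP : ∀ᵐ x ∂P, x ∈ ⋃ k, D k)]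
  intro s hs
  rw [hsum, Measure.restrict_sum _ (hm s hs), lintegral_sum_measure,
    Measure.sum_apply _ ((hm s hs).inter hA)]
  exact tsum_congr fun k => h k s hs

theorem setIntegral_toReal [IsFiniteMeasure P] (hm : m ≤ m0) (hgm : Measurable[m] g)
    (h : IsCondProb m A g P) {s : Set Ω} (hs : MeasurableSet[m] s) :
    ∫ x in s, (g x).toReal ∂P = (P (s ∩ A)).toReal := by
  have hgm0 : Measurable g := hgm.mono hm le_rfl
  rw [integral_toReal hgm0.aemeasurable (ae_lt_top hgm0 (h s hs ▸ measure_ne_top P _)), h s hs]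

end IsCondProb

theorem isCondProb_condLExp (hm : m ≤ m0) (P : Measure Ω) [SigmaFinite (P.trim hm)]
    (hA : MeasurableSet A) : IsCondProb m A (P⁻[A.indicator 1|m]) P := fun s hs => by
  rw [setLIntegral_condLExp hm P _ hs, lintegral_indicator_one hA, Measure.restrict_apply hA,
    inter_comm]

theorem exists_forall_isCondProb (hm : m ≤ m0) (hA : MeasurableSet A) (P : ℕ → Measure Ω)
    [∀ k, IsFiniteMeasure (P k)] {B : ℕ → Set Ω} (hB : ∀ k, MeasurableSet[m] (B k)) :
    ∃ g, Measurable[m] g ∧ ∀ Q : Measure Ω, Q (⋃ k, B k)ᶜ = 0 →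
      (∀ k, ∃ (c : ℝ≥0∞) (C : Set Ω),
        MeasurableSet[m] C ∧ Q.restrict (B k) = c • (P k).restrict C) →
      IsCondProb m A g Q := by
  set g : ℕ → Ω → ℝ≥0∞ := fun k => (P k)⁻[A.indicator 1|m]
  have hg : ∀ k, IsCondProb m A (g k) (P k) := fun k => isCondProb_condLExp hm (P k) hA
  have hDm : ∀ k, MeasurableSet[m] (disjointed B k) := MeasurableSet.disjointed hB
  have hglue : ∀ k, EqOn (g k) (fun x => ∑' j, (disjointed B j).indicator (g j) x)
      (disjointed B k) := fun k x hx => by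
    dsimp only
    rw [tsum_eq_single k fun j hj => indicator_of_notMem
      (fun hxj => (disjoint_disjointed B hj).le_bot ⟨hxj, hx⟩) _, indicator_of_mem hx]
  have hgm : ∀ k, Measurable[m] ((disjointed B k).indicator (g k)) :=
    fun k => (measurable_condLExp _ _ _).indicator (hDm k)
  refine ⟨fun x => ∑' j, (disjointed B j).indicator (g j) x, by fun_prop, fun Q hQ hQB => ?_⟩
  refine IsCondProb.of_restrict_iUnion hm hA hDm (disjoint_disjointed B)
    (by rwa [iUnion_disjointed]) fun k => ?_
  obtain ⟨c, C, hC, hQk⟩ := hQB k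
  rw [← Measure.restrict_restrict_of_subset (disjointed_subset B k), hQk, Measure.restrict_smul]
  exact ((((hg k).restrict hm hC).restrict hm (hDm k)).congr hm (hm _ (hDm k)) (hglue k)).smul c

theorem isLSSufficient_of_isCondProb (hm : m ≤ m0) {M : Set (Measure Ω)}
    (hM : ∀ P ∈ M, IsFiniteMeasure P)
    (h : ∀ A, MeasurableSet A → ∃ g, Measurable[m] g ∧ ∀ P ∈ M, IsCondProb m A g P) :
    IsLSSufficient m0 m M := fun A hA => by
  obtain ⟨g, hgm, hg⟩ := h A hA
  refine ⟨fun x => (g x).toReal, hgm.ennreal_toReal, fun P hP s hs => ?_⟩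
  have := hM P hP
  exact (hg P hP).setIntegral_toReal hm hgm hs

end CondProb

section Model

variable {S : Set EReal} {ι : Type*} [Fintype ι] {μ : Measure S}

def uprayModel (μ : Measure S) (ι : Type*) [Fintype ι] : Set (Measure (ι → S)) :=
  {P | ∃ J : Set S, IsUpperSet J ∧ 0 < μ J ∧ μ J < ∞ ∧ P = Measure.pi fun _ : ι => condLaw μ J}

theorem isProbabilityMeasure_of_mem_uprayModel {P : Measure (ι → S)} (hP : P ∈ uprayModel μ ι) :
    IsProbabilityMeasure P := by
  obtain ⟨J, -, hJ0, hJt, rfl⟩ := hP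
  have := isProbabilityMeasure_condLaw hJ0.ne' hJt.ne
  infer_instance

theorem setIntegral_pi_eq_zero_of_isUpperSet [Nonempty ι] {h : (ι → S) → ℝ}
    (hzero : ∀ P ∈ uprayModel μ ι, ∫ x, h x ∂P = 0) {J K : Set S} (hJ : IsUpperSet J)
    (hJ0 : 0 < μ J) (hJt : μ J < ∞) (hK : IsUpperSet K) :
    ∫ x in univ.pi fun _ => K, h x ∂(Measure.pi fun _ : ι => condLaw μ J) = 0 := by
  rcases hJ.total hK with hJK | hKJ
  · rw [restrict_pi_condLaw_of_subset hJK hK.measurableSet hJ0.ne' hJt.ne]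
    exact hzero _ ⟨J, hJ, hJ0, hJt, rfl⟩
  by_cases hK0 : μ K = 0
  · rw [Measure.restrict_eq_zero.mpr
      (pi_condLaw_pi_eq_zero hK.measurableSet hK0 hJ0.ne' hJt.ne), integral_zero_measure]
  have hKt : μ K < ∞ := (measure_mono hKJ).trans_lt hJt
  rw [restrict_pi_condLaw_comm hJ.measurableSet hK.measurableSet hJ0.ne' hJt.ne hK0 hKt.ne,
    restrict_pi_condLaw_of_subset hKJ hJ.measurableSet hK0 hKt.ne, integral_smul_measure,
    hzero _ ⟨K, hK, pos_iff_ne_zero.mpr hK0, hKt, rfl⟩, smul_zero]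

theorem isLSComplete_uprayModel [Nonempty ι] :
    IsLSComplete MeasurableSpace.pi (MeasurableSpace.comap coordInf inferInstance)
      (uprayModel μ ι) := by
  rintro h hh hint hzero P hP
  have := isProbabilityMeasure_of_mem_uprayModel hP
  obtain ⟨J, hJ, hJ0, hJt, rfl⟩ := hP
  refine ae_eq_zero_of_setIntegral_eq_zero_of_isPiSystem measurable_coordInf.comap_le
    comap_coordInf_eq_generateFrom isPiSystem_pi_isUpperSet hh (hint _ ⟨J, hJ, hJ0, hJt, rfl⟩)
    ?_ (hzero _ ⟨J, hJ, hJ0, hJt, rfl⟩)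
  rintro _ ⟨K, hK, rfl⟩
  exact setIntegral_pi_eq_zero_of_isUpperSet hzero hJ hJ0 hJt hK

theorem isLSSufficient_uprayModel [Nonempty ι] :
    IsLSSufficient MeasurableSpace.pi (MeasurableSpace.comap coordInf inferInstance)
      (uprayModel μ ι) := by
  have hm := (measurable_coordInf (S := S) (ι := ι)).comap_le
  refine isLSSufficient_of_isCondProb hm
    (fun _ hP => have := isProbabilityMeasure_of_mem_uprayModel hP; inferInstance) fun A hA => ?_
  set 𝒰 : Set (Set S) := {J | IsUpperSet J ∧ 0 < μ J ∧ μ J < ∞}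
  rcases 𝒰.eq_empty_or_nonempty with h𝒰 | h𝒰
  · refine ⟨0, measurable_const, ?_⟩
    rintro _ ⟨J, hJ, hJ0, hJt, rfl⟩
    exact (eq_empty_iff_forall_notMem.mp h𝒰 J ⟨hJ, hJ0, hJt⟩).elim
  have h𝒰chain : IsChain (· ⊆ ·) 𝒰 := fun J hJ K hK _ => hJ.1.total hK.1
  obtain ⟨K, hK𝒰, hK⟩ := h𝒰chain.exists_seq_measure_sdiff_iUnion_eq_zero h𝒰
    (fun J hJ => hJ.1.measurableSet) fun J hJ => hJ.2.2.ne
  have := fun k => isProbabilityMeasure_condLaw (hK𝒰 k).2.1.ne' (hK𝒰 k).2.2.ne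
  obtain ⟨g, hgm, hg⟩ := exists_forall_isCondProb hm hA
    (fun k => Measure.pi fun _ : ι => condLaw μ (K k))
    fun k => measurableSet_comap_coordInf_pi (hK𝒰 k).1
  refine ⟨g, hgm, ?_⟩
  rintro _ ⟨J, hJ, hJ0, hJt, rfl⟩
  refine hg _ ?_ fun k => ⟨_, _, measurableSet_comap_coordInf_pi hJ,
    restrict_pi_condLaw_comm hJ.measurableSet (hK𝒰 k).1.measurableSet hJ0.ne' hJt.ne
      (hK𝒰 k).2.1.ne' (hK𝒰 k).2.2.ne⟩
  exact measure_mono_null (compl_subset_compl.mpr (pi_iUnion_subset_iUnion_pi fun k => (hK𝒰 k).1))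
    (pi_condLaw_compl_pi_eq_zero (MeasurableSet.iUnion fun k => (hK𝒰 k).1.measurableSet)
      (hK J ⟨hJ, hJ0, hJt⟩) hJ0.ne' hJt.ne)

end Model

/-- **Corollary (a).** On a measurable subspace `S` of the extended real line, the
statistic `min_{i=1}^n Xᵢ` (the infimum of the coordinates) is complete and sufficient
for the model `{μ(·|J)^{⊗n} : J upray in S, 0 < μ(J) < ∞}`. -/
theorem min_complete_sufficient_for_uprays
    (S : Set EReal) (μ : Measure S) (n : ℕ) (hn : 0 < n) :
    IsLSComplete MeasurableSpace.pi
        (MeasurableSpace.comap (fun x : Fin n → S => ⨅ i, (x i : EReal)) inferInstance)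
        {P : Measure (Fin n → S) | ∃ J : Set S,
          (∀ x ∈ J, ∀ y : S, x ≤ y → y ∈ J) ∧ 0 < μ J ∧ μ J < ⊤ ∧
          P = Measure.pi fun _ : Fin n => condLaw μ J} ∧
      IsLSSufficient MeasurableSpace.pi
        (MeasurableSpace.comap (fun x : Fin n → S => ⨅ i, (x i : EReal)) inferInstance)
        {P : Measure (Fin n → S) | ∃ J : Set S,
          (∀ x ∈ J, ∀ y : S, x ≤ y → y ∈ J) ∧ 0 < μ J ∧ μ J < ⊤ ∧
          P = Measure.pi fun _ : Fin n => condLaw μ J} := by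
  have : Nonempty (Fin n) := Fin.pos_iff_nonempty.mp hn
  simp only [← isUpperSet_iff_forall_mem_le]
  exact ⟨isLSComplete_uprayModel, isLSSufficient_uprayModel⟩
end
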